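/- If the global interaction graph G(f) of f : {0,1}^n → {0,1}^n has no positive cycle, then f has at most one fixed point. -/

import Mathlib

/-- State of a Boolean network with `n` components. -/
abbrev BState (n : ℕ) := Fin n → Bool

/-- Positive arc `j → i` in the global interaction graph `G(f)`:
the discrete partial derivative `f_{ij}` is positive at some state. -/
def posArc {n : ℕ} (f : BState n → BState n) (j i : Fin n) : Prop :=
  ∃ x : BState n, f (Function.update x j true) i = true ∧
    f (Function.update x j false) i = false

/-- Negative arc `j → i` in `G(f)`:
the discrete partial derivative `f_{ij}` is negative at some state. -/
def negArc {n : ℕ} (f : BState n → BState n) (j i : Fin n) : Prop :=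
  ∃ x : BState n, f (Function.update x j true) i = false ∧
    f (Function.update x j false) i = true

/-- Unsigned arc `j → i` in the interaction graph: `f_i` depends on `x_j`. -/
def arc {n : ℕ} (f : BState n → BState n) (j i : Fin n) : Prop :=
  posArc f j i ∨ negArc f j i

/-- Arc of given sign (`true` = positive, `false` = negative). -/
def signedArc {n : ℕ} (f : BState n → BState n) (ε : Bool) (j i : Fin n) : Prop :=
  if ε then posArc f j i else negArc f j i

/-- A signed cycle of `G(f)`: vertices `vert 0 → vert 1 → ⋯ → vert len → vert 0`
(so the length is `len + 1`), pairwise distinct, each consecutive arc present in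
`G(f)` with sign `sign k`. -/
structure SignedCycle {n : ℕ} (f : BState n → BState n) where
  len : ℕ
  vert : Fin (len + 1) → Fin n
  inj : Function.Injective vert
  sign : Fin (len + 1) → Bool
  arcs : ∀ k : Fin (len + 1), signedArc f (sign k) (vert k) (vert (k + 1))

/-- Length (number of arcs) of a signed cycle. -/
def SignedCycle.length {n : ℕ} {f : BState n → BState n} (C : SignedCycle f) : ℕ :=
  C.len + 1

/-- A cycle is positive iff it has an even number of negative arcs. -/
def SignedCycle.Positive {n : ℕ} {f : BState n → BState n} (C : SignedCycle f) : Prop :=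
  Even (Finset.univ.filter (fun k => C.sign k = false)).card

/-- A cycle is negative iff it has an odd number of negative arcs. -/
def SignedCycle.Negative {n : ℕ} {f : BState n → BState n} (C : SignedCycle f) : Prop :=
  Odd (Finset.univ.filter (fun k => C.sign k = false)).card

/-- An unsigned cycle of the interaction graph. -/
structure UCycle {n : ℕ} (f : BState n → BState n) where
  len : ℕ
  vert : Fin (len + 1) → Fin n
  inj : Function.Injective vert
  arcs : ∀ k : Fin (len + 1), arc f (vert k) (vert (k + 1))

/-- One step of the asynchronous dynamics `Γ(f)`. -/
def asyncStep {n : ℕ} (f : BState n → BState n) (x y : BState n) : Prop :=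
  ∃ i : Fin n, f x i ≠ x i ∧ y = Function.update x i (f x i)

/-- There is a path of length `L` from `x` to `y` in `Γ(f)`. -/
def asyncPath {n : ℕ} (f : BState n → BState n) (x y : BState n) (L : ℕ) : Prop :=
  ∃ p : ℕ → BState n, p 0 = x ∧ p L = y ∧ ∀ k < L, asyncStep f (p k) (p (k + 1))

/-! If `x ≠ y` are fixed points, let `Δ` be the set of coordinates where they differ.
For `i ∈ Δ`, moving from `x` to `y` one coordinate at a time changes `f_i` from `x_i` to `y_i`,
so some `j ∈ Δ` has an arc `j → i` of `G(f)` which is positive iff `y_i = y_j`. Every vertex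
of `Δ` thus has an in-neighbour in `Δ`, so `G(f)` has a cycle inside `Δ`. Its negative arcs
are exactly the places where `y` changes value along the cycle, so there is an even number of
them and the cycle is positive. -/

open Function Finset

theorem exists_update_ne_of_apply_ne {ι β γ : Type*} [DecidableEq ι] [Finite ι]
    (g : (ι → β) → γ) {x y : ι → β} (h : g x ≠ g y) :
    ∃ j z, x j ≠ y j ∧ g (update z j (x j)) ≠ g y ∧ g (update z j (y j)) = g y := by
  cases nonempty_fintype ι
  suffices key : ∀ (s : Finset ι) (x : ι → β), (∀ i ∉ s, x i = y i) → g x ≠ g y →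
      ∃ j z, x j ≠ y j ∧ g (update z j (x j)) ≠ g y ∧ g (update z j (y j)) = g y from
    key univ x (by simp) h
  intro s
  induction s using Finset.induction_on with
  | empty =>
    exact fun x hxy hne => absurd (congrArg g (funext fun i => hxy i (notMem_empty i))) hne
  | insert a s _ ih =>
    intro x hxy hne
    by_cases hflip : g (update x a (y a)) = g y
    · refine ⟨a, x, fun hxa => hne ?_, by rwa [update_eq_self], hflip⟩
      rwa [← hxa, update_eq_self] at hflip
    · have hagree : ∀ i ∉ s, update x a (y a) i = y i := by
        intro i hi
        by_cases hia : i = a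
        · simp [hia]
        · simpa [hia] using hxy i (by simp [hia, hi])
      obtain ⟨j, z, hj, hzx, hzy⟩ := ih (update x a (y a)) hagree hflip
      have hja : j ≠ a := by rintro rfl; simp at hj
      simp only [update_of_ne hja] at hj hzx
      exact ⟨j, z, hj, hzx, hzy⟩

theorem signedArc_beq_of_update {n : ℕ} {f : BState n → BState n} {z : BState n} {i j : Fin n}
    {b c : Bool} (hc : f (update z j c) i = b) (hnc : f (update z j (!c)) i ≠ b) :
    signedArc f (b == c) j i := by
  cases b <;> cases c <;> simp_all [signedArc, posArc, negArc] <;>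
    first | exact ⟨z, hc, hnc⟩ | exact ⟨z, hnc, hc⟩

theorem exists_signedArc_of_fixedPoints {n : ℕ} {f : BState n → BState n} {x y : BState n}
    (hx : f x = x) (hy : f y = y) {i : Fin n} (hi : x i ≠ y i) :
    ∃ j, x j ≠ y j ∧ signedArc f (y i == y j) j i := by
  obtain ⟨j, z, hj, hzx, hzy⟩ :=
    exists_update_ne_of_apply_ne (fun z => f z i) (show f x i ≠ f y i by rwa [hx, hy])
  simp only [hy] at hzx hzy
  rw [Bool.eq_not_of_ne hj] at hzx
  exact ⟨j, hj, signedArc_beq_of_update hzy hzx⟩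

theorem Function.exists_mem_periodicPts {α : Type*} [Finite α] [Nonempty α] (g : α → α) :
    ∃ c, c ∈ periodicPts g := by
  obtain ⟨x⟩ := ‹Nonempty α›
  obtain ⟨m, n, hmn, heq⟩ := Finite.exists_ne_map_eq_of_infinite (fun k => g^[k] x)
  wlog hlt : m < n generalizing m n
  · exact this n m hmn.symm heq.symm (hmn.lt_or_gt.resolve_left hlt)
  refine ⟨g^[m] x, mk_mem_periodicPts (n := n - m) (Nat.sub_pos_of_lt hlt) ?_⟩
  rw [IsPeriodicPt, IsFixedPt, ← iterate_add_apply, Nat.sub_add_cancel hlt.le]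
  exact heq.symm

/-- The cycle is a periodic orbit of a choice of predecessors, traversed backwards. -/
theorem exists_cycle_of_forall_exists_pred {α : Type*} [Finite α] [Nonempty α]
    {R : α → α → Prop} (h : ∀ i, ∃ j, R j i) :
    ∃ (L : ℕ) (v : Fin (L + 1) → α), Injective v ∧ ∀ k, R (v k) (v (k + 1)) := by
  choose p hp using h
  obtain ⟨c, hc⟩ := exists_mem_periodicPts p
  obtain ⟨L, hL⟩ := Nat.exists_eq_add_one.mpr (minimalPeriod_pos_of_mem_periodicPts hc)
  let w : Fin (L + 1) → α := fun k => p^[k] c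
  have hw_inj : Injective w := fun k l hkl => Fin.ext <|
    iterate_injOn_Iio_minimalPeriod (by rw [Set.mem_Iio, hL]; exact k.isLt)
      (by rw [Set.mem_Iio, hL]; exact l.isLt) hkl
  have hw_succ : ∀ k, w (k + 1) = p (w k) := fun k => by
    have hmod := iterate_mod_minimalPeriod_eq (f := p) (x := c) (n := k + 1)
    rw [hL] at hmod
    change p^[(k + 1 : Fin (L + 1))] c = p (p^[k] c)
    rw [Fin.val_add, Fin.val_one', Nat.add_mod_mod, hmod, iterate_succ_apply']
  refine ⟨L, w ∘ Neg.neg, hw_inj.comp neg_injective, fun k => ?_⟩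
  have hk : -(k + 1) + 1 = -k := by rw [neg_add, neg_add_cancel_right]
  simpa only [comp_apply, ← hw_succ, hk] using hp (w (-(k + 1)))

theorem Equiv.Perm.even_card_filter_ne_apply {α : Type*} [Fintype α] (e : Perm α)
    (b : α → Bool) : Even #{k | b k ≠ b (e k)} := by
  let χ : Bool → ZMod 2 := fun a => if a then 1 else 0
  have hχ : ∀ a c : Bool, ((if a ≠ c then 1 else 0 : ℕ) : ZMod 2) = χ a + χ c := by decide
  rw [← ZMod.natCast_eq_zero_iff_even, card_filter, Nat.cast_sum]
  simp only [hχ, sum_add_distrib, Equiv.sum_comp e (fun k => χ (b k)), CharTwo.add_self_eq_zero]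

/-- Thomas' first rule (global version): if `G(f)` has no positive cycle,
then `f` has at most one fixed point. -/
theorem stmt1 {n : ℕ} (f : BState n → BState n)
    (h : ∀ C : SignedCycle f, ¬ C.Positive) :
    ∀ x y : BState n, f x = x → f y = y → x = y := by
  intro x y hx hy
  by_contra hne
  obtain ⟨i, hi⟩ := Function.ne_iff.mp hne
  have : Nonempty {i // x i ≠ y i} := ⟨⟨i, hi⟩⟩
  obtain ⟨L, v, hv_inj, hv_arcs⟩ := exists_cycle_of_forall_exists_pred
    (R := fun j i : {i // x i ≠ y i} => signedArc f (y i == y j) j i) fun i =>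
      let ⟨j, hj, hji⟩ := exists_signedArc_of_fixedPoints hx hy i.2
      ⟨⟨j, hj⟩, hji⟩
  refine h ⟨L, Subtype.val ∘ v, Subtype.val_injective.comp hv_inj,
    fun k => y (v (k + 1)) == y (v k), hv_arcs⟩ ?_
  show Even #{k | (y (v (k + 1)) == y (v k)) = false}
  convert (Equiv.addRight 1).even_card_filter_ne_apply fun k => y (v k) using 3 with k
  simp [ne_comm]
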